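/- Let S^{αβ} be the spinor generators (S^{αβ})^A_B = (1/2)(Σ_Ẋ σ^{α AẊ} σ^β_{BẊ} − Σ_Ẋ σ^{β AẊ} σ^α_{BẊ}) and S̄^{αβ} their entrywise complex conjugates, with S_{αβ} = η_{αγ}η_{βδ} S^{γδ}. Then on ℂ² ⊗ ℂ²: (i) Σ_{α,β=0}^{3} S^{αβ} ⊗ S_{αβ} = 4 P_ε − 1, where P_ε is the operator with components (P_ε)^{AB}_{CD} = (1/2) ε^{AB} ε_{CD} (ε the antisymmetric 2×2 matrix with ε_{12} = 1, and ε^{AB} = ε_{AB}), and (ii) Σ_{α,β=0}^{3} S^{αβ} ⊗ S̄_{αβ} = 0. -/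

import Mathlib

open Kronecker

noncomputable section

/-- The Minkowski metric `η = diag(1,-1,-1,-1)` (complex-valued components). -/
def etaC : Fin 4 → Fin 4 → ℂ := fun μ ν => if μ = ν then (if μ = 0 then 1 else -1) else 0

/-- `σ₀` the 2×2 identity, `σ₁, σ₂, σ₃` the Pauli matrices. -/
def sigma : Fin 4 → Matrix (Fin 2) (Fin 2) ℂ :=
  ![1, !![0, 1; 1, 0], !![0, -Complex.I; Complex.I, 0], !![1, 0; 0, -1]]

/-- `σ̃_μ = σ^μ = η^{μν} σ_ν`. -/
def sigmaTilde (μ : Fin 4) : Matrix (Fin 2) (Fin 2) ℂ := ∑ ν : Fin 4, etaC μ ν • sigma ν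

/-- Van der Waerden symbol with upper spinor indices: `σ_μ^{AẊ} = (1/√2)(σ_μ)_{AX}`. -/
def vdwUp (μ : Fin 4) (A X : Fin 2) : ℂ := ((Real.sqrt 2 : ℝ) : ℂ)⁻¹ * sigma μ A X

/-- Van der Waerden symbol with lower spinor indices: `σ_{μ AẊ} = (1/√2)(σ̃_μ^T)_{AX}`. -/
def vdwDown (μ : Fin 4) (A X : Fin 2) : ℂ :=
  ((Real.sqrt 2 : ℝ) : ℂ)⁻¹ * (sigmaTilde μ).transpose A X

/-- `σ^{α AẊ} = η^{αμ} σ_μ^{AẊ}`. -/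
def vdwUpU (α : Fin 4) (A X : Fin 2) : ℂ := ∑ μ : Fin 4, etaC α μ * vdwUp μ A X

/-- `σ^α_{BẊ} = η^{αμ} σ_{μ BẊ}`. -/
def vdwDownU (α : Fin 4) (B X : Fin 2) : ℂ := ∑ μ : Fin 4, etaC α μ * vdwDown μ B X

/-- The spinor representation generators
`(S^{αβ})^A_B = (1/2)(Σ_Ẋ σ^{α AẊ} σ^β_{BẊ} − Σ_Ẋ σ^{β AẊ} σ^α_{BẊ})`. -/
def Sgen (α β : Fin 4) : Matrix (Fin 2) (Fin 2) ℂ :=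
  Matrix.of fun A B =>
    (1 / 2 : ℂ) * ((∑ X : Fin 2, vdwUpU α A X * vdwDownU β B X) -
      (∑ X : Fin 2, vdwUpU β A X * vdwDownU α B X))

/-- The generators with lowered indices, `S_{αβ} = η_{αγ} η_{βδ} S^{γδ}`. -/
def SgenLow (α β : Fin 4) : Matrix (Fin 2) (Fin 2) ℂ :=
  ∑ γ : Fin 4, ∑ δ : Fin 4, (etaC α γ * etaC β δ) • Sgen γ δ

/-- The antisymmetric spinor metric `ε` with `ε₁₂ = 1` (indices raised with `ε^{AB} = ε_{AB}`). -/
def eps : Fin 2 → Fin 2 → ℂ := fun A B => (!![0, 1; -1, 0] : Matrix (Fin 2) (Fin 2) ℂ) A B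

/-- The projector `(P_ε)^{AB}_{CD} = (1/2) ε^{AB} ε_{CD}` on `ℂ² ⊗ ℂ²`. -/
def Peps : Matrix (Fin 2 × Fin 2) (Fin 2 × Fin 2) ℂ :=
  Matrix.of fun p q => (1 / 2 : ℂ) * eps p.1 p.2 * eps q.1 q.2

/-!
Because `η` is diagonal, `S^{αβ} = (η^{αα} σ_α σ_β − η^{ββ} σ_β σ_α) / 4` and
`S_{αβ} = η_{αα} η_{ββ} S^{αβ}`: the boosts are `S^{0k} = σ_k / 2` and the rotations
`S^{ij} = −(i/2) ε_{ijk} σ_k`. Applying a ring endomorphism `φ` of `ℂ` to the second tensor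
factor, the boosts contribute `−½ Σ_k σ_k ⊗ φ(σ_k)` and the rotations `(i φ(i) / 2) Σ_k σ_k ⊗ φ(σ_k)`.
For `φ = id` the total coefficient is `−1`, and the Fierz identity
`Σ_k σ_k ⊗ σ_k = 1 − 4 P_ε` gives the first claim; for complex conjugation it is `0`.
-/

open Matrix Complex

lemma etaC_zero_zero : etaC 0 0 = 1 := rfl

lemma etaC_self_of_ne_zero {μ : Fin 4} (h : μ ≠ 0) : etaC μ μ = -1 := by simp [etaC, h]

lemma etaC_mul_self (μ : Fin 4) : etaC μ μ * etaC μ μ = 1 := by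
  simp only [etaC, if_true]; split_ifs <;> norm_num

lemma sum_etaC_smul {M : Type*} [AddCommMonoid M] [Module ℂ M] (μ : Fin 4) (f : Fin 4 → M) :
    ∑ ν, etaC μ ν • f ν = etaC μ μ • f μ :=
  Finset.sum_eq_single μ (fun ν _ h => by simp [etaC, Ne.symm h]) (by simp)

lemma sigmaTilde_eq (μ : Fin 4) : sigmaTilde μ = etaC μ μ • sigma μ :=
  sum_etaC_smul μ sigma

lemma vdwUpU_eq (α : Fin 4) (A X : Fin 2) : vdwUpU α A X = etaC α α * vdwUp α A X :=
  sum_etaC_smul α fun μ => vdwUp μ A X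

lemma vdwDownU_eq (α : Fin 4) (B X : Fin 2) :
    vdwDownU α B X = ((√2 : ℝ) : ℂ)⁻¹ * sigma α X B := by
  refine (sum_etaC_smul α fun μ => vdwDown μ B X).trans ?_
  simp only [vdwDown, sigmaTilde_eq, transpose_apply, Matrix.smul_apply, smul_eq_mul]
  linear_combination ((√2 : ℝ) : ℂ)⁻¹ * sigma α X B * etaC_mul_self α

lemma ofReal_sqrt_two_inv_mul_self : ((√2 : ℝ) : ℂ)⁻¹ * ((√2 : ℝ) : ℂ)⁻¹ = 1 / 2 := by
  rw [← mul_inv, ← ofReal_mul, Real.mul_self_sqrt zero_le_two]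
  norm_num

lemma Sgen_eq (α β : Fin 4) :
    Sgen α β = (etaC α α / 4) • (sigma α * sigma β) + (-etaC β β / 4) • (sigma β * sigma α) := by
  ext A B
  simp only [Sgen, of_apply, vdwUpU_eq, vdwDownU_eq, vdwUp, Matrix.add_apply, Matrix.smul_apply,
    mul_apply, Fin.sum_univ_two, smul_eq_mul]
  linear_combination (etaC α α * (sigma α A 0 * sigma β 0 B + sigma α A 1 * sigma β 1 B)
    - etaC β β * (sigma β A 0 * sigma α 0 B + sigma β A 1 * sigma α 1 B)) / 2 *
    ofReal_sqrt_two_inv_mul_self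

lemma SgenLow_eq (α β : Fin 4) : SgenLow α β = (etaC α α * etaC β β) • Sgen α β := by
  simp_rw [SgenLow, mul_smul, ← Finset.smul_sum]
  rw [sum_etaC_smul, sum_etaC_smul β (Sgen α)]

lemma sigma_zero : sigma 0 = 1 := rfl

lemma sigma_mul_self (μ : Fin 4) : sigma μ * sigma μ = 1 := by
  fin_cases μ <;> ext i j <;> fin_cases i <;> fin_cases j <;> simp [sigma, mul_apply]

lemma sigma_one_mul_sigma_two : sigma 1 * sigma 2 = I • sigma 3 := by
  ext i j; fin_cases i <;> fin_cases j <;> simp [sigma, mul_apply]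

lemma sigma_two_mul_sigma_one : sigma 2 * sigma 1 = -I • sigma 3 := by
  ext i j; fin_cases i <;> fin_cases j <;> simp [sigma, mul_apply]

lemma sigma_two_mul_sigma_three : sigma 2 * sigma 3 = I • sigma 1 := by
  ext i j; fin_cases i <;> fin_cases j <;> simp [sigma, mul_apply]

lemma sigma_three_mul_sigma_two : sigma 3 * sigma 2 = -I • sigma 1 := by
  ext i j; fin_cases i <;> fin_cases j <;> simp [sigma, mul_apply]

lemma sigma_three_mul_sigma_one : sigma 3 * sigma 1 = I • sigma 2 := by
  ext i j; fin_cases i <;> fin_cases j <;> simp [sigma, mul_apply]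

lemma sigma_one_mul_sigma_three : sigma 1 * sigma 3 = -I • sigma 2 := by
  ext i j; fin_cases i <;> fin_cases j <;> simp [sigma, mul_apply]

lemma sum_Sgen_kronecker_map_SgenLow (φ : ℂ →+* ℂ) :
    ∑ α : Fin 4, ∑ β : Fin 4, Sgen α β ⊗ₖ (SgenLow α β).map φ =
      ((I * φ I - 1) / 2) • (sigma 1 ⊗ₖ (sigma 1).map φ + sigma 2 ⊗ₖ (sigma 2).map φ +
        sigma 3 ⊗ₖ (sigma 3).map φ) := by
  simp (disch := decide) only [Fin.sum_univ_four, SgenLow_eq, Sgen_eq,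
    Matrix.map_add _ (map_add φ), Matrix.map_smul' _ _ _ (map_mul φ),
    Matrix.map_one _ (map_zero φ) (map_one φ), add_kronecker, kronecker_add, smul_kronecker,
    kronecker_smul, sigma_mul_self, sigma_zero, one_mul, mul_one, sigma_one_mul_sigma_two,
    sigma_two_mul_sigma_one, sigma_two_mul_sigma_three, sigma_three_mul_sigma_two,
    sigma_three_mul_sigma_one, sigma_one_mul_sigma_three, etaC_zero_zero, etaC_self_of_ne_zero,
    map_mul, map_neg, map_one, map_div₀, map_ofNat]
  module

lemma sum_sigma_kronecker_sigma :
    sigma 1 ⊗ₖ sigma 1 + sigma 2 ⊗ₖ sigma 2 + sigma 3 ⊗ₖ sigma 3 = 1 - (4 : ℂ) • Peps := by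
  ext ⟨A, B⟩ ⟨C, D⟩
  fin_cases A <;> fin_cases B <;> fin_cases C <;> fin_cases D <;>
    simp [sigma, Peps, eps, one_apply] <;> norm_num

/-- On `ℂ² ⊗ ℂ²`: `Σ_{αβ} S^{αβ} ⊗ S_{αβ} = 4 P_ε − 1` and `Σ_{αβ} S^{αβ} ⊗ S̄_{αβ} = 0`. -/
theorem spinor_tensor_casimir :
    (∑ α : Fin 4, ∑ β : Fin 4, Sgen α β ⊗ₖ SgenLow α β =
      (4 : ℂ) • Peps - (1 : Matrix (Fin 2 × Fin 2) (Fin 2 × Fin 2) ℂ)) ∧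
    (∑ α : Fin 4, ∑ β : Fin 4, Sgen α β ⊗ₖ (SgenLow α β).map (starRingEnd ℂ) = 0) := by
  constructor
  · have h := sum_Sgen_kronecker_map_SgenLow (RingHom.id ℂ)
    simp only [RingHom.coe_id, Matrix.map_id, RingHom.id_apply, I_mul_I] at h
    rw [h, sum_sigma_kronecker_sigma]
    module
  · rw [sum_Sgen_kronecker_map_SgenLow, conj_I, mul_neg, I_mul_I, neg_neg, sub_self, zero_div,
      zero_smul]
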